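/- arXiv:1212.6489 — 3 statements merged into one kernel-verified Lean document; each statement's English description precedes it below -/
import Mathlib

section
/- Let N and d be positive integers and let φ : Matrix N N ℝ → (ℝ^d → ℝ^d) satisfy φ(1) = id and φ(g*h) = φ(g) ∘ φ(h) for all invertible N×N real matrices g, h (an action of GL(N,ℝ) on ℝ^d, not necessarily linear in x). Assume that for each y ∈ ℝ^d the map g ↦ φ(g)(y) is Fréchet differentiable at every invertible matrix. Fix x ∈ ℝ^d and a covector ξ ∈ (ℝ^d →ₗ[ℝ] ℝ), and define the phase S : Matrix N N ℝ × (Matrix N N ℝ →ₗ[ℝ] ℝ) → ℝ by S(v,θ) = ξ(φ(exp(-v))(x)) - θ(v), where exp is the matrix exponential. Then S is differentiable, and its total derivative vanishes at (v,θ) if and only if v = 0 and θ = J(x,ξ), where J(x,ξ)(w) = -ξ(X^w(x)) and X^w(x) is the derivative at the identity matrix of g ↦ φ(g)(x) applied to w. Moreover the value of S at this unique critical point is S(0, J(x,ξ)) = ξ(x). -/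
/-!
The phase has the form `S (v, θ) = F v - θ v` with `F v = ξ (φ (exp (-v)) x)`. Its derivative at
`(v, θ)` is `(w, η) ↦ (F'(v) - θ) w - η v`. This vanishes for every `η` only if `v = 0`, since
continuous functionals separate points, and then for every `w` only if `θ = F'(0)`. Since `exp`
has derivative the identity at `0`, the chain rule gives `F'(0) = -ξ ∘ X^·(x) = J`.
-/

attribute [local instance] Matrix.normedAddCommGroup Matrix.normedSpace

section DualPairing

variable {𝕜 E : Type*} [NontriviallyNormedField 𝕜] [NormedAddCommGroup E] [NormedSpace 𝕜 E]

open ContinuousLinearMap in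
theorem HasFDerivAt.sub_dualPairing {F : E → 𝕜} {F' : E →L[𝕜] 𝕜} {v : E}
    (hF : HasFDerivAt F F' v) (θ : E →L[𝕜] 𝕜) :
    HasFDerivAt (fun p : E × (E →L[𝕜] 𝕜) => F p.1 - p.2 p.1)
      ((F' - θ).comp (fst 𝕜 E (E →L[𝕜] 𝕜)) - (snd 𝕜 E (E →L[𝕜] 𝕜)).flip v) (v, θ) := by
  refine ((hF.comp (v, θ) hasFDerivAt_fst).sub
    (hasFDerivAt_snd.clm_apply hasFDerivAt_fst)).congr_fderiv ?_
  ext p <;> simp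

theorem fderiv_sub_dualPairing_eq_zero_iff [SeparatingDual 𝕜 E] {F : E → 𝕜} {v : E}
    (hF : DifferentiableAt 𝕜 F v) (θ : E →L[𝕜] 𝕜) :
    fderiv 𝕜 (fun p : E × (E →L[𝕜] 𝕜) => F p.1 - p.2 p.1) (v, θ) = 0 ↔
      v = 0 ∧ θ = fderiv 𝕜 F 0 := by
  rw [(hF.hasFDerivAt.sub_dualPairing θ).fderiv]
  constructor
  · intro hL
    have hL' (w : E) (η : E →L[𝕜] 𝕜) : (fderiv 𝕜 F v - θ) w - η v = 0 := by
      simpa using DFunLike.congr_fun hL (w, η)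
    obtain rfl : v = 0 :=
      SeparatingDual.eq_zero_of_forall_dual_eq_zero fun η => by simpa using hL' 0 η
    exact ⟨rfl, .symm <| ContinuousLinearMap.ext fun w => by simpa [sub_eq_zero] using hL' w 0⟩
  · rintro ⟨rfl, rfl⟩
    ext p <;> simp

end DualPairing

namespace Matrix

open NormedSpace

variable {m 𝕂 : Type*} [Fintype m] [DecidableEq m] [RCLike 𝕂]

/- `DifferentiableAt` and `HasFDerivAt` only see the topology, which the sup norm shares with
the `L^∞` operator norm; the latter makes matrices a Banach algebra, where `exp` is analytic. -/
theorem differentiable_exp : Differentiable 𝕂 (exp : Matrix m m 𝕂 → Matrix m m 𝕂) := by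
  let := Matrix.linftyOpNormedRing (n := m) (α := 𝕂)
  let := Matrix.linftyOpNormedAlgebra (n := m) (R := 𝕂) (α := 𝕂)
  let : NormedAddCommGroup (Matrix m m 𝕂) := NonUnitalNormedRing.toNormedAddCommGroup
  let : NormedSpace 𝕂 (Matrix m m 𝕂) := NormedAlgebra.toNormedSpace _
  exact fun x => (@exp_analytic 𝕂 _ _ _ _ _ _ (FiniteDimensional.complete 𝕂 _) x).differentiableAt

theorem hasFDerivAt_exp_zero :
    HasFDerivAt (exp : Matrix m m 𝕂 → Matrix m m 𝕂) (1 : Matrix m m 𝕂 →L[𝕂] Matrix m m 𝕂) 0 := by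
  let := Matrix.linftyOpNormedRing (n := m) (α := 𝕂)
  let := Matrix.linftyOpNormedAlgebra (n := m) (R := 𝕂) (α := 𝕂)
  exact @_root_.hasFDerivAt_exp_zero _ _ _ _ _ (FiniteDimensional.complete 𝕂 _)

theorem hasFDerivAt_comp_exp_neg {G : Type*} [NormedAddCommGroup G] [NormedSpace 𝕂 G]
    {f : Matrix m m 𝕂 → G} (hf : DifferentiableAt 𝕂 f 1) :
    HasFDerivAt (fun v => f (exp (-v))) (-fderiv 𝕂 f 1) 0 := by
  have hexp : HasFDerivAt (exp : Matrix m m 𝕂 → Matrix m m 𝕂)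
      (1 : Matrix m m 𝕂 →L[𝕂] Matrix m m 𝕂) (-0) := by
    simpa using hasFDerivAt_exp_zero
  have hf' : HasFDerivAt f (fderiv 𝕂 f 1) (exp (-0)) := by
    simpa using hf.hasFDerivAt
  refine (hf'.comp 0 (hexp.comp 0 (hasFDerivAt_id 0).neg)).congr_fderiv ?_
  ext w
  exact map_neg (fderiv 𝕂 f 1) w

end Matrix

theorem stmt3_general (N d : ℕ)
    (φ : Matrix (Fin N) (Fin N) ℝ → (Fin d → ℝ) → (Fin d → ℝ))
    (hone : φ 1 = id)
    (hdiff : ∀ (y : Fin d → ℝ) (g : Matrix (Fin N) (Fin N) ℝ), IsUnit g →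
      DifferentiableAt ℝ (fun h => φ h y) g)
    (x : Fin d → ℝ) (ξ : (Fin d → ℝ) →L[ℝ] ℝ)
    (S : Matrix (Fin N) (Fin N) ℝ × (Matrix (Fin N) (Fin N) ℝ →L[ℝ] ℝ) → ℝ)
    (hS : S = fun p => ξ (φ (NormedSpace.exp (-p.1)) x) - p.2 p.1)
    (J : Matrix (Fin N) (Fin N) ℝ →L[ℝ] ℝ)
    (hJ : J = -(ξ.comp (fderiv ℝ (fun g => φ g x) 1))) :
    Differentiable ℝ S ∧
    (∀ (v : Matrix (Fin N) (Fin N) ℝ) (θ : Matrix (Fin N) (Fin N) ℝ →L[ℝ] ℝ),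
      fderiv ℝ S (v, θ) = 0 ↔ v = 0 ∧ θ = J) ∧
    S (0, J) = ξ x := by
  set F : Matrix (Fin N) (Fin N) ℝ → ℝ := fun v => ξ (φ (NormedSpace.exp (-v)) x)
  have hF : Differentiable ℝ F := fun v => by
    have hexp : DifferentiableAt ℝ (fun v => NormedSpace.exp (-v)) v :=
      (Matrix.differentiable_exp (-v)).comp v differentiableAt_id.neg
    exact ξ.differentiableAt.comp v
      ((hdiff x _ (Matrix.isUnit_exp (-v))).comp (g := fun g => φ g x) v hexp)
  have hF0 : fderiv ℝ F 0 = J := by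
    rw [hJ, ← ContinuousLinearMap.comp_neg]
    exact (ξ.hasFDerivAt.comp 0 (Matrix.hasFDerivAt_comp_exp_neg (hdiff x 1 isUnit_one))).fderiv
  subst hS
  refine ⟨fun p => ((hF p.1).hasFDerivAt.sub_dualPairing p.2).differentiableAt,
    fun v θ => hF0 ▸ fderiv_sub_dualPairing_eq_zero_iff (hF v) θ, ?_⟩
  simp [hone]

/-- For a (not necessarily linear) action `φ` of `GL(N,ℝ)` on `ℝ^d`, differentiable in the
group variable, the phase `S(v,θ) = ξ(φ(exp(-v))(x)) - θ(v)` of the oscillatory integral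
defining the quantized momentum map is differentiable and has a unique critical point
`(v,θ) = (0, J(x,ξ))`, where `J(x,ξ)(w) = -ξ(X^w(x))` is the classical momentum map of the
cotangent lift; the critical value is `S(0, J(x,ξ)) = ξ(x)`. -/
theorem stmt3 (N d : ℕ) (hN : 0 < N) (hd : 0 < d)
    (φ : Matrix (Fin N) (Fin N) ℝ → (Fin d → ℝ) → (Fin d → ℝ))
    (hone : φ 1 = id)
    (hmul : ∀ g h : Matrix (Fin N) (Fin N) ℝ, IsUnit g → IsUnit h →
      φ (g * h) = φ g ∘ φ h)
    (hdiff : ∀ (y : Fin d → ℝ) (g : Matrix (Fin N) (Fin N) ℝ), IsUnit g →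
      DifferentiableAt ℝ (fun h => φ h y) g)
    (x : Fin d → ℝ) (ξ : (Fin d → ℝ) →L[ℝ] ℝ)
    (S : Matrix (Fin N) (Fin N) ℝ × (Matrix (Fin N) (Fin N) ℝ →L[ℝ] ℝ) → ℝ)
    (hS : S = fun p => ξ (φ (NormedSpace.exp (-p.1)) x) - p.2 p.1)
    (J : Matrix (Fin N) (Fin N) ℝ →L[ℝ] ℝ)
    (hJ : J = -(ξ.comp (fderiv ℝ (fun g => φ g x) 1))) :
    Differentiable ℝ S ∧
    (∀ (v : Matrix (Fin N) (Fin N) ℝ) (θ : Matrix (Fin N) (Fin N) ℝ →L[ℝ] ℝ),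
      fderiv ℝ S (v, θ) = 0 ↔ v = 0 ∧ θ = J) ∧
    S (0, J) = ξ x :=
  stmt3_general N d φ hone hdiff x ξ S hS J hJ
end

section
/- Let d be a positive integer and ψ : ℝ^d → ℝ^d a differentiable bijection with differentiable inverse ψ⁻¹. Fix x ∈ ℝ^d and a covector ξ ∈ (ℝ^d →ₗ[ℝ] ℝ). Define S : ℝ^d × (ℝ^d →ₗ[ℝ] ℝ) × ℝ^d × (ℝ^d →ₗ[ℝ] ℝ) → ℝ by S(x̄, ξ̄, x̃, ξ̃) = ξ̄(ψ⁻¹(x) - x̄) + ξ̃(x̄ - x̃) + ξ(ψ(x̃) - x). Then the total derivative of S vanishes at (x̄, ξ̄, x̃, ξ̃) if and only if x̄ = x̃ = ψ⁻¹(x) and ξ̄ = ξ̃ = ξ ∘ Dψ(ψ⁻¹(x)), where Dψ(y) denotes the Fréchet derivative of ψ at y. Moreover the value of S at this unique critical point is 0. -/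
/-!
The phase is linear in `ξ̄` and `ξ̃` and affine in `x̄`, so its partial derivatives are read off
directly: `∂_ξ̄ S = y - x̄`, `∂_ξ̃ S = x̄ - x̃`, `∂_x̄ S = ξ̃ - ξ̄` and `∂_x̃ S = ξ ∘ Dψ(x̃) - ξ̃`.
Since continuous functionals separate points, the first two vanish exactly when `x̄ = x̃ = y`,
and the last two then force `ξ̄ = ξ̃ = ξ ∘ Dψ(y)`. At that point only `ξ(ψ y - x)` survives,
which is `0` for `y = ψ⁻¹(x)`.
-/

open ContinuousLinearMap

section ConjugationPhase

variable {𝕜 E F : Type*} [NontriviallyNormedField 𝕜]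
  [NormedAddCommGroup E] [NormedSpace 𝕜 E] [NormedAddCommGroup F] [NormedSpace 𝕜 F]

/-- The phase at the point `((x̄, ξ̄), (x̃, ξ̃))`, with `y` in the role of `ψ⁻¹(x)`. -/
def conjugationPhase (ψ : E → F) (y : E) (x : F) (ξ : F →L[𝕜] 𝕜) :
    (E × (E →L[𝕜] 𝕜)) × (E × (E →L[𝕜] 𝕜)) → 𝕜 :=
  fun p => p.1.2 (y - p.1.1) + p.2.2 (p.1.1 - p.2.1) + ξ (ψ p.2.1 - x)

variable {ψ : E → F} {y : E} {x : F} {ξ : F →L[𝕜] 𝕜}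

theorem conjugationPhase_apply_critical :
    conjugationPhase ψ y x ξ ((y, ξ.comp (fderiv 𝕜 ψ y)), (y, ξ.comp (fderiv 𝕜 ψ y))) =
      ξ (ψ y - x) := by
  simp [conjugationPhase]

theorem fderiv_conjugationPhase_apply {x₁ x₂ : E} {ξ₁ ξ₂ : E →L[𝕜] 𝕜}
    (hψ : DifferentiableAt 𝕜 ψ x₂) (q : (E × (E →L[𝕜] 𝕜)) × (E × (E →L[𝕜] 𝕜))) :
    fderiv 𝕜 (conjugationPhase ψ y x ξ) ((x₁, ξ₁), (x₂, ξ₂)) q =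
      q.1.2 (y - x₁) + q.2.2 (x₁ - x₂) + (ξ₂ - ξ₁) q.1.1
        + (ξ.comp (fderiv 𝕜 ψ x₂) - ξ₂) q.2.1 := by
  set p : (E × (E →L[𝕜] 𝕜)) × (E × (E →L[𝕜] 𝕜)) := ((x₁, ξ₁), (x₂, ξ₂))
  have hx₁ : HasFDerivAt (fun p : (E × (E →L[𝕜] 𝕜)) × (E × (E →L[𝕜] 𝕜)) => p.1.1) _ p :=
    (hasFDerivAt_fst (𝕜 := 𝕜) (p := p)).fst
  have hx₂ : HasFDerivAt (fun p : (E × (E →L[𝕜] 𝕜)) × (E × (E →L[𝕜] 𝕜)) => p.2.1) _ p :=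
    (hasFDerivAt_snd (𝕜 := 𝕜) (p := p)).fst
  have hS : HasFDerivAt (conjugationPhase ψ y x ξ) _ p :=
    ((hasFDerivAt_fst.snd.clm_apply ((hasFDerivAt_const y p).sub hx₁)).add
      (hasFDerivAt_snd.snd.clm_apply (hx₁.sub hx₂))).add
      (ξ.hasFDerivAt.comp p ((hψ.hasFDerivAt.comp p hx₂).sub_const x))
  rw [hS.fderiv]
  simp only [p, add_apply, sub_apply, comp_apply, zero_apply, flip_apply, coe_fst', coe_snd',
    Pi.sub_apply, map_sub, map_zero]
  ring

variable [SeparatingDual 𝕜 E]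

theorem fderiv_conjugationPhase_eq_zero_iff {x₁ x₂ : E} {ξ₁ ξ₂ : E →L[𝕜] 𝕜}
    (hψ : DifferentiableAt 𝕜 ψ x₂) :
    fderiv 𝕜 (conjugationPhase ψ y x ξ) ((x₁, ξ₁), (x₂, ξ₂)) = 0 ↔
      x₁ = y ∧ x₂ = x₁ ∧ ξ₁ = ξ₂ ∧ ξ₂ = ξ.comp (fderiv 𝕜 ψ x₂) := by
  have hD := fderiv_conjugationPhase_apply (y := y) (x := x) (ξ := ξ) (x₁ := x₁) (ξ₁ := ξ₁)
    (ξ₂ := ξ₂) hψ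
  constructor
  · intro h
    have hD' (q : (E × (E →L[𝕜] 𝕜)) × (E × (E →L[𝕜] 𝕜))) :
        q.1.2 (y - x₁) + q.2.2 (x₁ - x₂) + (ξ₂ - ξ₁) q.1.1
          + (ξ.comp (fderiv 𝕜 ψ x₂) - ξ₂) q.2.1 = 0 := by
      rw [← hD, h, zero_apply]
    have hy : y - x₁ = 0 := SeparatingDual.eq_zero_of_forall_dual_eq_zero (R := 𝕜)
      fun φ => by simpa using hD' ((0, φ), (0, 0))
    have hx : x₁ - x₂ = 0 := SeparatingDual.eq_zero_of_forall_dual_eq_zero (R := 𝕜)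
      fun φ => by simpa using hD' ((0, 0), (0, φ))
    have hξ₁ : ξ₂ - ξ₁ = 0 := ext fun v => by simpa using hD' ((v, 0), (0, 0))
    have hξ₂ : ξ.comp (fderiv 𝕜 ψ x₂) - ξ₂ = 0 := ext fun v => by
      simpa using hD' ((0, 0), (v, 0))
    rw [sub_eq_zero] at hy hx hξ₁ hξ₂
    exact ⟨hy.symm, hx.symm, hξ₁.symm, hξ₂.symm⟩
  · rintro ⟨rfl, rfl, rfl, hξ₂⟩
    refine ext fun q => ?_
    rw [hD, ← hξ₂]
    simp

theorem fderiv_conjugationPhase_eq_zero_iff_eq (hψ : Differentiable 𝕜 ψ)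
    (p : (E × (E →L[𝕜] 𝕜)) × (E × (E →L[𝕜] 𝕜))) :
    fderiv 𝕜 (conjugationPhase ψ y x ξ) p = 0 ↔
      p = ((y, ξ.comp (fderiv 𝕜 ψ y)), (y, ξ.comp (fderiv 𝕜 ψ y))) := by
  obtain ⟨⟨x₁, ξ₁⟩, x₂, ξ₂⟩ := p
  rw [fderiv_conjugationPhase_eq_zero_iff (hψ x₂), Prod.mk.injEq, Prod.mk.injEq, Prod.mk.injEq]
  constructor
  · rintro ⟨rfl, rfl, rfl, rfl⟩
    exact ⟨⟨rfl, rfl⟩, rfl, rfl⟩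
  · rintro ⟨⟨rfl, rfl⟩, rfl, rfl⟩
    exact ⟨rfl, rfl, rfl, rfl⟩

end ConjugationPhase

theorem stmt4_general (d : ℕ) (ψ ψinv : (Fin d → ℝ) → (Fin d → ℝ))
    (hright : Function.RightInverse ψinv ψ)
    (hψ : Differentiable ℝ ψ)
    (x : Fin d → ℝ) (ξ : (Fin d → ℝ) →L[ℝ] ℝ)
    (S : ((Fin d → ℝ) × ((Fin d → ℝ) →L[ℝ] ℝ)) × ((Fin d → ℝ) × ((Fin d → ℝ) →L[ℝ] ℝ)) → ℝ)
    (hS : S = fun p => p.1.2 (ψinv x - p.1.1) + p.2.2 (p.1.1 - p.2.1) + ξ (ψ p.2.1 - x)) :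
    (∀ p, fderiv ℝ S p = 0 ↔
      p = ((ψinv x, ξ.comp (fderiv ℝ ψ (ψinv x))), (ψinv x, ξ.comp (fderiv ℝ ψ (ψinv x))))) ∧
    S ((ψinv x, ξ.comp (fderiv ℝ ψ (ψinv x))), (ψinv x, ξ.comp (fderiv ℝ ψ (ψinv x)))) = 0 := by
  change S = conjugationPhase ψ (ψinv x) x ξ at hS
  subst hS
  refine ⟨fderiv_conjugationPhase_eq_zero_iff_eq hψ, ?_⟩
  rw [conjugationPhase_apply_critical, hright x, sub_self, map_zero]

/-- The phase `S(x̄,ξ̄,x̃,ξ̃) = ξ̄(ψ⁻¹(x) - x̄) + ξ̃(x̄ - x̃) + ξ(ψ(x̃) - x)` of the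
oscillatory integral expressing `T_g Op(f) T_{g⁻¹}` has a unique critical point
`x̄ = x̃ = ψ⁻¹(x)`, `ξ̄ = ξ̃ = ξ ∘ Dψ(ψ⁻¹(x))`, and the critical value is `0`. -/
theorem stmt4 (d : ℕ) (hd : 0 < d) (ψ ψinv : (Fin d → ℝ) → (Fin d → ℝ))
    (hleft : Function.LeftInverse ψinv ψ) (hright : Function.RightInverse ψinv ψ)
    (hψ : Differentiable ℝ ψ) (hψinv : Differentiable ℝ ψinv)
    (x : Fin d → ℝ) (ξ : (Fin d → ℝ) →L[ℝ] ℝ)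
    (S : ((Fin d → ℝ) × ((Fin d → ℝ) →L[ℝ] ℝ)) × ((Fin d → ℝ) × ((Fin d → ℝ) →L[ℝ] ℝ)) → ℝ)
    (hS : S = fun p => p.1.2 (ψinv x - p.1.1) + p.2.2 (p.1.1 - p.2.1) + ξ (ψ p.2.1 - x)) :
    (∀ p, fderiv ℝ S p = 0 ↔
      p = ((ψinv x, ξ.comp (fderiv ℝ ψ (ψinv x))), (ψinv x, ξ.comp (fderiv ℝ ψ (ψinv x))))) ∧
    S ((ψinv x, ξ.comp (fderiv ℝ ψ (ψinv x))), (ψinv x, ξ.comp (fderiv ℝ ψ (ψinv x)))) = 0 :=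
  stmt4_general d ψ ψinv hright hψ x ξ S hS
end

section
/- Let N and d be positive integers and let φ : Matrix N N ℝ → (ℝ^d → ℝ^d) satisfy φ(1) = id and φ(g*h) = φ(g) ∘ φ(h) for all invertible N×N real matrices g, h. Assume that for each y ∈ ℝ^d the map g ↦ φ(g)(y) is differentiable at the identity matrix, and that for each invertible g the map φ(g) : ℝ^d → ℝ^d is differentiable. Then for every invertible g, every x ∈ ℝ^d and every covector ξ ∈ (ℝ^d →ₗ[ℝ] ℝ), the momentum map is equivariant: J(φ̃_g(x,ξ)) = Ad_g^♯(J(x,ξ)). Consequently, for every function f on the dual space (Matrix N N ℝ →ₗ[ℝ] ℝ) and every invertible g, the comomentum map satisfies J^*(Ad_g^♯ f) = φ̃_{g⁻¹}^*(J^* f), where (J^* f)(x,ξ) = f(J(x,ξ)). -/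
/-!
Write `X^v(y)` for the derivative of `h ↦ φ h y` at `1` in the direction `v`. Near the identity
`φ h (φ g x) = φ g (φ (g⁻¹ h g) x)`, so differentiating at `h = 1` gives
`X^v(φ g x) = Dφ_g(x) (X^{g⁻¹ v g}(x))`. The covector of the cotangent lift is `ξ ∘ Dφ_{g⁻¹}`,
and `Dφ_{g⁻¹} ∘ Dφ_g = id` because `φ g⁻¹ ∘ φ g = id`, so `J(φ̃_g(x,ξ))(v) = -ξ(X^{g⁻¹ v g}(x))`,
which is `Ad_g^♯ (J(x,ξ))(v)`.
-/

attribute [local instance] Matrix.normedAddCommGroup Matrix.normedSpace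

/-- The momentum map of the cotangent lift: `J(x,ξ)(v) = -ξ(X^v(x))`, where
`X^v(x)` is the derivative at the identity of `g ↦ φ(g)(x)` in the direction `v`. -/
noncomputable def momentumMap {N d : ℕ}
    (φ : Matrix (Fin N) (Fin N) ℝ → (Fin d → ℝ) → (Fin d → ℝ))
    (x : Fin d → ℝ) (ξ : (Fin d → ℝ) →ₗ[ℝ] ℝ) : Matrix (Fin N) (Fin N) ℝ →ₗ[ℝ] ℝ :=
  -(ξ ∘ₗ (fderiv ℝ (fun g => φ g x) 1).toLinearMap)

/-- The cotangent lift of the action: `φ̃_g(x,ξ) = (φ(g)(x), ξ ∘ Dφ(g⁻¹)(φ(g)(x)))`. -/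
noncomputable def cotangentLift {N d : ℕ}
    (φ : Matrix (Fin N) (Fin N) ℝ → (Fin d → ℝ) → (Fin d → ℝ))
    (g : Matrix (Fin N) (Fin N) ℝ) (p : (Fin d → ℝ) × ((Fin d → ℝ) →ₗ[ℝ] ℝ)) :
    (Fin d → ℝ) × ((Fin d → ℝ) →ₗ[ℝ] ℝ) :=
  (φ g p.1, p.2 ∘ₗ (fderiv ℝ (φ g⁻¹) (φ g p.1)).toLinearMap)

/-- The coadjoint action on linear functionals: `Ad_g^♯ α = α ∘ Ad_{g⁻¹}`,
where `Ad_{g⁻¹} v = g⁻¹ * v * g`. -/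
noncomputable def coadjoint {N : ℕ} (g : Matrix (Fin N) (Fin N) ℝ)
    (α : Matrix (Fin N) (Fin N) ℝ →ₗ[ℝ] ℝ) : Matrix (Fin N) (Fin N) ℝ →ₗ[ℝ] ℝ :=
  α ∘ₗ ((LinearMap.mulLeft ℝ g⁻¹).comp (LinearMap.mulRight ℝ g))

open Filter Topology

theorem Matrix.isOpen_setOf_isUnit {n 𝕜 : Type*} [Fintype n] [DecidableEq n] [Field 𝕜]
    [TopologicalSpace 𝕜] [IsTopologicalRing 𝕜] [T1Space 𝕜] :
    IsOpen {A : Matrix n n 𝕜 | IsUnit A} := by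
  simp only [Matrix.isUnit_iff_isUnit_det, isUnit_iff_ne_zero]
  exact isOpen_ne_fun continuous_id.matrix_det continuous_const

theorem orbitMap_eventuallyEq_conj {n 𝕜 E : Type*} [Fintype n] [DecidableEq n]
    [NontriviallyNormedField 𝕜] {φ : Matrix n n 𝕜 → E → E}
    (hmul : ∀ g h : Matrix n n 𝕜, IsUnit g → IsUnit h → φ (g * h) = φ g ∘ φ h)
    {g : Matrix n n 𝕜} (hg : IsUnit g) (x : E) :
    (fun h => φ h (φ g x)) =ᶠ[𝓝 1] fun h => φ g (φ (g⁻¹ * h * g) x) := by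
  filter_upwards [Matrix.isOpen_setOf_isUnit.mem_nhds isUnit_one] with h hh
  have hginv : IsUnit g⁻¹ := Matrix.isUnit_nonsing_inv_iff.mpr hg
  have hhg : h * g = g * (g⁻¹ * h * g) := by
    rw [← mul_assoc, ← mul_assoc, Matrix.mul_nonsing_inv g ((Matrix.isUnit_iff_isUnit_det g).mp hg),
      one_mul]
  calc φ h (φ g x) = φ (h * g) x := by rw [hmul h g hh hg, Function.comp_apply]
    _ = φ g (φ (g⁻¹ * h * g) x) := by
      rw [hhg, hmul g _ hg ((hginv.mul hh).mul hg), Function.comp_apply]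

section Differentiation

variable {𝕜 : Type*} [NontriviallyNormedField 𝕜] {n : Type*} [Fintype n] [DecidableEq n]
  {E : Type*} [NormedAddCommGroup E] [NormedSpace 𝕜 E] {φ : Matrix n n 𝕜 → E → E}

theorem fderiv_inv_comp_fderiv_of_mul (hone : φ 1 = id)
    (hmul : ∀ g h : Matrix n n 𝕜, IsUnit g → IsUnit h → φ (g * h) = φ g ∘ φ h)
    {g : Matrix n n 𝕜} (hg : IsUnit g) {x : E} (hx : DifferentiableAt 𝕜 (φ g) x)
    (hgx : DifferentiableAt 𝕜 (φ g⁻¹) (φ g x)) :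
    (fderiv 𝕜 (φ g⁻¹) (φ g x)).comp (fderiv 𝕜 (φ g) x) = ContinuousLinearMap.id 𝕜 E := by
  rw [← fderiv_comp x hgx hx, ← hmul _ _ (Matrix.isUnit_nonsing_inv_iff.mpr hg) hg,
    Matrix.nonsing_inv_mul g ((Matrix.isUnit_iff_isUnit_det g).mp hg), hone, fderiv_id]

variable [CompleteSpace 𝕜]

variable (𝕜) in
noncomputable def Matrix.conjInvCLM (g : Matrix n n 𝕜) : Matrix n n 𝕜 →L[𝕜] Matrix n n 𝕜 :=
  LinearMap.toContinuousLinearMap ((LinearMap.mulLeft 𝕜 g⁻¹).comp (LinearMap.mulRight 𝕜 g))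

theorem Matrix.conjInvCLM_apply (g h : Matrix n n 𝕜) : conjInvCLM 𝕜 g h = g⁻¹ * h * g :=
  (mul_assoc _ _ _).symm

theorem fderiv_orbitMap_apply_smul (hone : φ 1 = id)
    (hmul : ∀ g h : Matrix n n 𝕜, IsUnit g → IsUnit h → φ (g * h) = φ g ∘ φ h)
    {g : Matrix n n 𝕜} (hg : IsUnit g) {x : E}
    (horb : DifferentiableAt 𝕜 (fun h => φ h x) 1) (hx : DifferentiableAt 𝕜 (φ g) x) :
    fderiv 𝕜 (fun h => φ h (φ g x)) 1 =
      (fderiv 𝕜 (φ g) x).comp ((fderiv 𝕜 (fun h => φ h x) 1).comp (g.conjInvCLM 𝕜)) := by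
  have hconj_one : g.conjInvCLM 𝕜 1 = 1 := by
    rw [Matrix.conjInvCLM_apply, mul_one,
      Matrix.nonsing_inv_mul g ((Matrix.isUnit_iff_isUnit_det g).mp hg)]
  have horb' : HasFDerivAt (fun h => φ h x) (fderiv 𝕜 (fun h => φ h x) 1)
      (g.conjInvCLM 𝕜 1) := by
    rw [hconj_one]; exact horb.hasFDerivAt
  have hx' : HasFDerivAt (φ g) (fderiv 𝕜 (φ g) x) (φ (g.conjInvCLM 𝕜 1) x) := by
    rw [hconj_one, hone]; exact hx.hasFDerivAt
  rw [(orbitMap_eventuallyEq_conj hmul hg x).fderiv_eq]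
  simp_rw [← Matrix.conjInvCLM_apply (𝕜 := 𝕜)]
  exact (hx'.comp (1 : Matrix n n 𝕜)
    (horb'.comp (1 : Matrix n n 𝕜) (g.conjInvCLM 𝕜).hasFDerivAt)).fderiv

end Differentiation

theorem momentumMap_cotangentLift {N d : ℕ}
    {φ : Matrix (Fin N) (Fin N) ℝ → (Fin d → ℝ) → (Fin d → ℝ)} (hone : φ 1 = id)
    (hmul : ∀ g h : Matrix (Fin N) (Fin N) ℝ, IsUnit g → IsUnit h → φ (g * h) = φ g ∘ φ h)
    (hdiff1 : ∀ y, DifferentiableAt ℝ (fun g => φ g y) (1 : Matrix (Fin N) (Fin N) ℝ))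
    (hdiff2 : ∀ g : Matrix (Fin N) (Fin N) ℝ, IsUnit g → Differentiable ℝ (φ g))
    {g : Matrix (Fin N) (Fin N) ℝ} (hg : IsUnit g) (x : Fin d → ℝ) (ξ : (Fin d → ℝ) →ₗ[ℝ] ℝ) :
    momentumMap φ (cotangentLift φ g (x, ξ)).1 (cotangentLift φ g (x, ξ)).2 =
      coadjoint g (momentumMap φ x ξ) := by
  have hinv := fderiv_inv_comp_fderiv_of_mul hone hmul hg (hdiff2 g hg x)
    (hdiff2 g⁻¹ (Matrix.isUnit_nonsing_inv_iff.mpr hg) (φ g x))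
  ext v
  simp only [momentumMap, cotangentLift, coadjoint, LinearMap.neg_apply, LinearMap.comp_apply,
    ContinuousLinearMap.coe_coe,
    fderiv_orbitMap_apply_smul hone hmul hg (hdiff1 x) (hdiff2 g hg x)]
  rw [← ContinuousLinearMap.comp_apply (fderiv ℝ (φ g⁻¹) _), ← ContinuousLinearMap.comp_assoc,
    hinv, ContinuousLinearMap.id_comp]
  rfl

theorem stmt7_general (N d : ℕ)
    (φ : Matrix (Fin N) (Fin N) ℝ → (Fin d → ℝ) → (Fin d → ℝ))
    (hone : φ 1 = id)
    (hmul : ∀ g h : Matrix (Fin N) (Fin N) ℝ, IsUnit g → IsUnit h →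
      φ (g * h) = φ g ∘ φ h)
    (hdiff1 : ∀ y : Fin d → ℝ,
      DifferentiableAt ℝ (fun g => φ g y) (1 : Matrix (Fin N) (Fin N) ℝ))
    (hdiff2 : ∀ g : Matrix (Fin N) (Fin N) ℝ, IsUnit g → Differentiable ℝ (φ g)) :
    (∀ g : Matrix (Fin N) (Fin N) ℝ, IsUnit g →
      ∀ (x : Fin d → ℝ) (ξ : (Fin d → ℝ) →ₗ[ℝ] ℝ),
        momentumMap φ (cotangentLift φ g (x, ξ)).1 (cotangentLift φ g (x, ξ)).2 =
          coadjoint g (momentumMap φ x ξ)) ∧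
    ∀ (f : (Matrix (Fin N) (Fin N) ℝ →ₗ[ℝ] ℝ) → ℝ) (g : Matrix (Fin N) (Fin N) ℝ),
      IsUnit g → ∀ (x : Fin d → ℝ) (ξ : (Fin d → ℝ) →ₗ[ℝ] ℝ),
        f (coadjoint g⁻¹ (momentumMap φ x ξ)) =
          f (momentumMap φ (cotangentLift φ g⁻¹ (x, ξ)).1 (cotangentLift φ g⁻¹ (x, ξ)).2) :=
  ⟨fun _ hg => momentumMap_cotangentLift hone hmul hdiff1 hdiff2 hg,
    fun f _ hg x ξ => congrArg f (momentumMap_cotangentLift hone hmul hdiff1 hdiff2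
      (Matrix.isUnit_nonsing_inv_iff.mpr hg) x ξ).symm⟩

/-- Equivariance of the momentum map of the cotangent lift of a `GL(N,ℝ)`-action on `ℝ^d`:
`J(φ̃_g(x,ξ)) = Ad_g^♯(J(x,ξ))`, and consequently `J^*(Ad_g^♯ f) = φ̃_{g⁻¹}^*(J^* f)`. -/
theorem stmt7 (N d : ℕ) (hN : 0 < N) (hd : 0 < d)
    (φ : Matrix (Fin N) (Fin N) ℝ → (Fin d → ℝ) → (Fin d → ℝ))
    (hone : φ 1 = id)
    (hmul : ∀ g h : Matrix (Fin N) (Fin N) ℝ, IsUnit g → IsUnit h →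
      φ (g * h) = φ g ∘ φ h)
    (hdiff1 : ∀ y : Fin d → ℝ,
      DifferentiableAt ℝ (fun g => φ g y) (1 : Matrix (Fin N) (Fin N) ℝ))
    (hdiff2 : ∀ g : Matrix (Fin N) (Fin N) ℝ, IsUnit g → Differentiable ℝ (φ g)) :
    (∀ g : Matrix (Fin N) (Fin N) ℝ, IsUnit g →
      ∀ (x : Fin d → ℝ) (ξ : (Fin d → ℝ) →ₗ[ℝ] ℝ),
        momentumMap φ (cotangentLift φ g (x, ξ)).1 (cotangentLift φ g (x, ξ)).2 =
          coadjoint g (momentumMap φ x ξ)) ∧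
    ∀ (f : (Matrix (Fin N) (Fin N) ℝ →ₗ[ℝ] ℝ) → ℝ) (g : Matrix (Fin N) (Fin N) ℝ),
      IsUnit g → ∀ (x : Fin d → ℝ) (ξ : (Fin d → ℝ) →ₗ[ℝ] ℝ),
        f (coadjoint g⁻¹ (momentumMap φ x ξ)) =
          f (momentumMap φ (cotangentLift φ g⁻¹ (x, ξ)).1 (cotangentLift φ g⁻¹ (x, ξ)).2) :=
  stmt7_general N d φ hone hmul hdiff1 hdiff2
end
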